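/- Let $\sigma_F^2 > 0$, and let $\hat{\eta}_n^{dp}$, $\hat{V}_n^{dp}$ be consistent estimators (in a metric space $(M,\rho)$ and $\mathbb{R}$ respectively) of $\eta$ and $V = \mathbb{E}[\rho^2(X,\eta)]$, with the data $X_1,\dots,X_n$ i.i.d. supported in $B(m_0,r)$ and $\rho(\cdot, \cdot)$ jointly continuous. Define $\tilde{\sigma}_F^2 = \frac{1}{n}\sum_{i=1}^n \rho^4(X_i, \hat{\eta}_n^{dp}) - (\hat{V}_n^{dp})^2$ and $\hat{\sigma}_F^{2,dp} = \tilde{\sigma}_F^2 + \zeta_n$ where $\zeta_n \sim \mathcal{N}(0, (16r^4/(n\mu))^2)$. Then $\hat{\sigma}_F^{2,dp} \to \sigma_F^2 = \mathrm{Var}(\rho^2(X, \eta))$ in probability. -/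

import Mathlib

open MeasureTheory ProbabilityTheory Filter Finset Metric

private lemma aux_pow4 {a b C : ℝ} (ha : 0 ≤ a) (hb : 0 ≤ b) (haC : a ≤ C) (hbC : b ≤ C) :
    |a ^ 4 - b ^ 4| ≤ 4 * C ^ 3 * |a - b| := by
  have h : a ^ 4 - b ^ 4 = (a - b) * (a ^ 3 + a ^ 2 * b + a * b ^ 2 + b ^ 3) := by ring
  rw [h, abs_mul]
  have hC : 0 ≤ C := le_trans ha haC
  have h2 : |a ^ 3 + a ^ 2 * b + a * b ^ 2 + b ^ 3| ≤ 4 * C ^ 3 := by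
    rw [abs_of_nonneg (by positivity)]
    nlinarith [pow_le_pow_left₀ ha haC 3, pow_le_pow_left₀ hb hbC 3,
      mul_le_mul (pow_le_pow_left₀ ha haC 2) hbC hb (by positivity),
      mul_le_mul (pow_le_pow_left₀ hb hbC 2) haC ha (by positivity)]
  calc |a - b| * |a ^ 3 + a ^ 2 * b + a * b ^ 2 + b ^ 3| ≤ |a - b| * (4 * C ^ 3) :=
        mul_le_mul_of_nonneg_left h2 (abs_nonneg _)
    _ = 4 * C ^ 3 * |a - b| := mul_comm _ _

private lemma aux_subset_tendsto {Ω : Type*} [MeasurableSpace Ω] (P : Measure Ω)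
    [IsProbabilityMeasure P] {T S : ℕ → Set Ω} (h : ∀ n, T n ⊆ S n)
    (hS : Tendsto (fun n => (P (S n)).toReal) atTop (nhds 0)) :
    Tendsto (fun n => (P (T n)).toReal) atTop (nhds 0) := by
  refine squeeze_zero (fun n => ENNReal.toReal_nonneg) (fun n => ?_) hS
  exact ENNReal.toReal_mono (measure_ne_top _ _) (measure_mono (h n))

private lemma aux_union_tendsto {Ω : Type*} [MeasurableSpace Ω] (P : Measure Ω)
    [IsProbabilityMeasure P] {A B : ℕ → Set Ω}
    (hA : Tendsto (fun n => (P (A n)).toReal) atTop (nhds 0))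
    (hB : Tendsto (fun n => (P (B n)).toReal) atTop (nhds 0)) :
    Tendsto (fun n => (P (A n ∪ B n)).toReal) atTop (nhds 0) := by
  refine squeeze_zero (fun n => ENNReal.toReal_nonneg) (fun n => ?_)
    (by simpa using hA.add hB)
  calc (P (A n ∪ B n)).toReal ≤ (P (A n) + P (B n)).toReal :=
        ENNReal.toReal_mono (by simp [ENNReal.add_ne_top, measure_ne_top]) (measure_union_le _ _)
    _ = (P (A n)).toReal + (P (B n)).toReal :=
        ENNReal.toReal_add (measure_ne_top _ _) (measure_ne_top _ _)

private lemma aux_gaussian_tail {t : ℕ → ℝ} (ht : Tendsto t atTop atTop) :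
    Tendsto (fun n => ((gaussianReal 0 1) {y : ℝ | t n < |y|}).toReal) atTop (nhds 0) := by
  have hmeas : ∀ a : ℝ, NullMeasurableSet {y : ℝ | a < |y|} (gaussianReal 0 1) := fun a =>
    ((isOpen_lt continuous_const continuous_abs).measurableSet).nullMeasurableSet
  have hanti : Antitone (fun a : ℝ => {y : ℝ | a < |y|}) := fun a b hab y hy =>
    lt_of_le_of_lt hab hy
  have key := tendsto_measure_iInter_atTop hmeas hanti ⟨0, measure_ne_top _ _⟩
  have hempty : (⋂ a : ℝ, {y : ℝ | a < |y|}) = ∅ := by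
    ext y
    simp only [Set.mem_iInter, Set.mem_setOf_eq, Set.mem_empty_iff_false, iff_false, not_forall,
      not_lt]
    exact ⟨|y|, le_refl _⟩
  rw [hempty, measure_empty] at key
  have h2 := (ENNReal.tendsto_toReal (by simp)).comp (key.comp ht)
  exact h2

set_option maxHeartbeats 1000000 in
theorem stmt16 {M Ω : Type*} [MetricSpace M] [MeasurableSpace M] [BorelSpace M]
    [MeasurableSpace Ω] (P : Measure Ω) [IsProbabilityMeasure P]
    (X : ℕ → Ω → M) (hmeas : ∀ i, Measurable (X i))
    (hindep : iIndepFun X P)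
    (hident : ∀ i, Measure.map (X i) P = Measure.map (X 0) P)
    (m₀ : M) (r : ℝ) (hr : 0 < r)
    (hsupp : ∀ i, ∀ᵐ ω ∂P, X i ω ∈ closedBall m₀ r)
    (η : M) (V σF : ℝ) (hσF : 0 < σF)
    (hV : V = ∫ ω, dist (X 0 ω) η ^ 2 ∂P)
    (hσFdef : σF ^ 2 = variance (fun ω => dist (X 0 ω) η ^ 2) P)
    (ηdp : ℕ → Ω → M) (Vdp : ℕ → Ω → ℝ) (μ : ℝ) (hμ : 0 < μ)
    (hηcons : ∀ ε : ℝ, 0 < ε →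
      Tendsto (fun n => (P {ω | dist (ηdp n ω) η > ε}).toReal) atTop (nhds 0))
    (hVcons : ∀ ε : ℝ, 0 < ε →
      Tendsto (fun n => (P {ω | |Vdp n ω - V| > ε}).toReal) atTop (nhds 0))
    (ζ : ℕ → Ω → ℝ) (hζmeas : ∀ n, Measurable (ζ n))
    (hζ : ∀ n : ℕ, 0 < n → Measure.map (ζ n) P =
      gaussianReal 0 (Real.toNNReal ((16 * r ^ 4 / (n * μ)) ^ 2))) :
    ∀ ε : ℝ, 0 < ε → Tendsto (fun n : ℕ =>
      (P {ω | |((1 / n : ℝ) * ∑ i : Fin n, dist (X i ω) (ηdp n ω) ^ 4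
          - (Vdp n ω) ^ 2 + ζ n ω) - σF ^ 2| > ε}).toReal)
      atTop (nhds 0) := by
  intro ε hε
  set ε4 : ℝ := ε / 4 with hε4def
  have hε4 : 0 < ε4 := by positivity
  set R0 : ℝ := r + dist m₀ η with hR0def
  have hR0 : 0 ≤ R0 := by positivity
  set Cc : ℝ := R0 + 1 with hCcdef
  have hCc : 0 < Cc := by positivity
  set δ₂ : ℝ := min 1 (ε4 / (4 * Cc ^ 3 + 1)) with hδ₂def
  have hδ₂pos : 0 < δ₂ := lt_min one_pos (by positivity)
  set δ₃ : ℝ := min 1 (ε4 / (2 * |V| + 1)) with hδ₃def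
  have h2V : (0:ℝ) < 2 * |V| + 1 := by positivity
  have hδ₃pos : 0 < δ₃ := lt_min one_pos (by positivity)
  -- the a.s. support event
  set G : Set Ω := {ω | ∀ i, X i ω ∈ closedBall m₀ r} with hGdef
  have hN : P Gᶜ = 0 := by
    have hae : ∀ᵐ ω ∂P, ∀ i, X i ω ∈ closedBall m₀ r := ae_all_iff.2 hsupp
    simpa [hGdef, Set.compl_setOf] using ae_iff.1 hae
  -- the iid sequence Y i = dist (X i) η ^ 4
  set Y : ℕ → Ω → ℝ := fun i ω => dist (X i ω) η ^ 4 with hYdef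
  set E : ℝ := ∫ ω, Y 0 ω ∂P with hEdef
  have hg : Measurable (fun x : M => dist x η ^ 4) :=
    ((continuous_id.dist continuous_const).pow 4).measurable
  have hYmeas : ∀ i, Measurable (Y i) := fun i => hg.comp (hmeas i)
  have hdistbd : ∀ i, ∀ᵐ ω ∂P, dist (X i ω) η ≤ R0 := fun i => by
    filter_upwards [hsupp i] with ω hω
    calc dist (X i ω) η ≤ dist (X i ω) m₀ + dist m₀ η := dist_triangle _ _ _
      _ ≤ r + dist m₀ η := add_le_add_left (mem_closedBall.mp hω) _
  have hint : Integrable (Y 0) P := by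
    refine memLp_one_iff_integrable.mp (MemLp.of_bound
      (hYmeas 0).aestronglyMeasurable (R0 ^ 4) ?_)
    filter_upwards [hdistbd 0] with ω hω
    rw [Real.norm_eq_abs, abs_of_nonneg (by positivity)]
    exact pow_le_pow_left₀ dist_nonneg hω 4
  have hindepY : Pairwise (Function.onFun (IndepFun · · P) Y) := fun i j hij =>
    (hindep.indepFun hij).comp hg hg
  have hidentY : ∀ i, IdentDistrib (Y i) (Y 0) P P := fun i =>
    IdentDistrib.comp ⟨(hmeas i).aemeasurable, (hmeas 0).aemeasurable, hident i⟩ hg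
  have hLLN := strong_law_ae_real Y hint hindepY hidentY
  -- the empirical average with true η
  set Cf : ℕ → Ω → ℝ := fun n ω => (1 / (n:ℝ)) * ∑ i : Fin n, dist (X i ω) η ^ 4 with hCfdef
  have hCf_eq : ∀ n ω, Cf n ω = (∑ i ∈ range n, Y i ω) / n := by
    intro n ω
    rw [hCfdef]
    simp only [← Fin.sum_univ_eq_sum_range (fun i => Y i ω) n]
    ring
  have hCmeas : ∀ n, AEStronglyMeasurable (Cf n) P := fun n =>
    ((Finset.measurable_sum Finset.univ fun (i : Fin n) _ =>
      (((continuous_id.dist continuous_const).pow 4).measurable.comp (hmeas i))).const_mul _).aestronglyMeasurable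
  have hTIM : TendstoInMeasure P Cf atTop (fun _ => E) := by
    refine tendstoInMeasure_of_tendsto_ae hCmeas ?_
    filter_upwards [hLLN] with ω hω
    refine Tendsto.congr (fun n => (hCf_eq n ω).symm) ?_
    exact hω
  have hS1 : Tendsto (fun n => (P {ω | ε4 ≤ dist (Cf n ω) E}).toReal) atTop (nhds 0) := by
    have := (ENNReal.tendsto_toReal (a := 0) (by simp)).comp
      (hTIM (ENNReal.ofReal ε4) (ENNReal.ofReal_pos.2 hε4))
    simp only [edist_dist, ENNReal.ofReal_le_ofReal_iff dist_nonneg] at this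
    exact this
  -- key identity for σF²
  have hEV : σF ^ 2 = E - V ^ 2 := by
    have hf2 : MemLp (fun ω => dist (X 0 ω) η ^ 2) 2 P := by
      refine MemLp.of_bound
        ((((continuous_id.dist continuous_const).pow 2).measurable.comp
          (hmeas 0)).aestronglyMeasurable) (R0 ^ 2) ?_
      filter_upwards [hdistbd 0] with ω hω
      rw [Real.norm_eq_abs, abs_of_nonneg (by positivity)]
      exact pow_le_pow_left₀ dist_nonneg hω 2
    rw [hσFdef, variance_eq_sub hf2]
    have h1 : (fun ω => dist (X 0 ω) η ^ 2) ^ 2 = Y 0 := by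
      funext ω
      simp only [Pi.pow_apply, hYdef]
      ring
    rw [h1]
    rw [hV, hEdef]
  -- the Gaussian noise tends to zero in probability
  have hS4 : Tendsto (fun n => (P {ω | |ζ n ω| > ε4}).toReal) atTop (nhds 0) := by
    set c : ℝ := ε4 * μ / (16 * r ^ 4) with hcdef
    have hc : 0 < c := by positivity
    have ht : Tendsto (fun n : ℕ => c * (n:ℝ)) atTop atTop :=
      (tendsto_natCast_atTop_atTop (R := ℝ)).const_mul_atTop hc
    have hgt := aux_gaussian_tail ht
    refine hgt.congr' ?_
    rw [EventuallyEq, eventually_atTop]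
    refine ⟨1, fun n hn => ?_⟩
    have hn0 : (0:ℝ) < (n:ℝ) := by exact_mod_cast hn
    set σn : ℝ := 16 * r ^ 4 / ((n:ℝ) * μ) with hσndef
    have hσn : 0 < σn := by positivity
    have mset : MeasurableSet {x : ℝ | ε4 < |x|} :=
      (isOpen_lt continuous_const continuous_abs).measurableSet
    have hmap1 : P {ω | |ζ n ω| > ε4} = Measure.map (ζ n) P {x : ℝ | ε4 < |x|} := by
      rw [Measure.map_apply (hζmeas n) mset]
      rfl
    have hmap2 : Measure.map (fun y : ℝ => σn * y) (gaussianReal 0 1) =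
        gaussianReal 0 (Real.toNNReal ((16 * r ^ 4 / ((n:ℝ) * μ)) ^ 2)) := by
      rw [gaussianReal_map_const_mul σn]
      congr 1
      · ring
      · ext
        rw [Real.coe_toNNReal _ (sq_nonneg _)]
        simp [hσndef]
    have hmap3 : (Measure.map (fun y : ℝ => σn * y) (gaussianReal 0 1)) {x : ℝ | ε4 < |x|}
        = (gaussianReal 0 1) {y : ℝ | c * (n:ℝ) < |y|} := by
      rw [Measure.map_apply (measurable_const_mul σn) mset]
      congr 1
      ext y
      simp only [Set.mem_preimage, Set.mem_setOf_eq, abs_mul, abs_of_pos hσn]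
      constructor
      · intro h
        have h2 : ε4 / σn < |y| := (div_lt_iff₀' hσn).mpr h
        calc c * (n:ℝ) = ε4 / σn := by
              rw [hcdef, hσndef]
              field_simp
          _ < |y| := h2
      · intro h
        have h2 : ε4 / σn < |y| := by
          calc ε4 / σn = c * (n:ℝ) := by
                rw [hcdef, hσndef]
                field_simp
            _ < |y| := h
        exact (div_lt_iff₀' hσn).mp h2
    rw [hmap1, hζ n hn, ← hmap2, hmap3]
  -- assemble
  set S1 : ℕ → Set Ω := fun n => {ω | ε4 ≤ dist (Cf n ω) E} with hS1def
  set S2 : ℕ → Set Ω := fun n => Gᶜ ∪ {ω | dist (ηdp n ω) η > δ₂} with hS2def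
  set S3 : ℕ → Set Ω := fun n => {ω | |Vdp n ω - V| > δ₃} with hS3def
  set S4 : ℕ → Set Ω := fun n => {ω | |ζ n ω| > ε4} with hS4def
  have hS2 : Tendsto (fun n => (P (S2 n)).toReal) atTop (nhds 0) := by
    refine aux_union_tendsto P ?_ (hηcons δ₂ hδ₂pos)
    simp [hN]
  have hSall : Tendsto (fun n => (P (S1 n ∪ (S2 n ∪ (S3 n ∪ S4 n)))).toReal) atTop (nhds 0) :=
    aux_union_tendsto P hS1 (aux_union_tendsto P hS2
      (aux_union_tendsto P (hVcons δ₃ hδ₃pos) hS4))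
  refine aux_subset_tendsto P (fun n => ?_) hSall
  intro ω hω
  by_contra hcon
  simp only [Set.mem_union, not_or] at hcon
  obtain ⟨h1, h2, h3, h4⟩ := hcon
  simp only [hS1def, Set.mem_setOf_eq, not_le] at h1
  simp only [hS2def, Set.mem_union, Set.mem_compl_iff, not_or] at h2
  obtain ⟨h2a, h2b⟩ := h2
  rw [not_not] at h2a
  simp only [Set.mem_setOf_eq, not_lt] at h2b
  simp only [hS3def, Set.mem_setOf_eq, gt_iff_lt, not_lt] at h3
  simp only [hS4def, Set.mem_setOf_eq, gt_iff_lt, not_lt] at h4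
  have h2a' : ∀ i, X i ω ∈ closedBall m₀ r := h2a
  simp only [Set.mem_setOf_eq, gt_iff_lt] at hω
  -- notation
  set Av : ℝ := (1 / (n:ℝ)) * ∑ i : Fin n, dist (X i ω) (ηdp n ω) ^ 4 with hAvdef
  set Cv : ℝ := Cf n ω with hCvdef
  set x : ℝ := Vdp n ω with hxdef
  set z : ℝ := ζ n ω with hzdef
  -- bound 1
  have b1 : |Cv - E| < ε4 := by rwa [Real.dist_eq] at h1
  -- bound 3
  have b3 : |V ^ 2 - x ^ 2| ≤ ε4 := by
    have hδ₃1 : δ₃ ≤ 1 := min_le_left _ _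
    have hδ₃2 : δ₃ ≤ ε4 / (2 * |V| + 1) := min_le_right _ _
    have hxV : |x + V| ≤ 2 * |V| + 1 := by
      have h5 : x + V = (x - V) + 2 * V := by ring
      rw [h5]
      calc |(x - V) + 2 * V| ≤ |x - V| + |2 * V| := abs_add_le _ _
        _ ≤ δ₃ + 2 * |V| := by
            rw [abs_mul]
            simp only [abs_two]
            exact add_le_add h3 le_rfl
        _ ≤ 2 * |V| + 1 := by linarith
    calc |V ^ 2 - x ^ 2| = |x - V| * |x + V| := by
          rw [← abs_mul, abs_sub_comm]
          congr 1
          ring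
      _ ≤ δ₃ * (2 * |V| + 1) := mul_le_mul h3 hxV (abs_nonneg _) hδ₃pos.le
      _ ≤ (ε4 / (2 * |V| + 1)) * (2 * |V| + 1) :=
          mul_le_mul_of_nonneg_right hδ₃2 h2V.le
      _ = ε4 := div_mul_cancel₀ _ h2V.ne'
  -- bound 2
  have b2 : |Av - Cv| ≤ ε4 := by
    have hδ₂1 : δ₂ ≤ 1 := min_le_left _ _
    have hδ₂2 : δ₂ ≤ ε4 / (4 * Cc ^ 3 + 1) := min_le_right _ _
    have hterm : ∀ i : Fin n,
        |dist (X i ω) (ηdp n ω) ^ 4 - dist (X i ω) η ^ 4| ≤ 4 * Cc ^ 3 * δ₂ := by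
      intro i
      have hb : dist (X i ω) η ≤ R0 := by
        calc dist (X i ω) η ≤ dist (X i ω) m₀ + dist m₀ η := dist_triangle _ _ _
          _ ≤ r + dist m₀ η := add_le_add_left (mem_closedBall.mp (h2a' i)) _
      have ha : dist (X i ω) (ηdp n ω) ≤ Cc := by
        calc dist (X i ω) (ηdp n ω) ≤ dist (X i ω) η + dist η (ηdp n ω) := dist_triangle _ _ _
          _ ≤ R0 + δ₂ := add_le_add hb (by rw [dist_comm]; exact h2b)
          _ ≤ R0 + 1 := by linarith
      have habs : |dist (X i ω) (ηdp n ω) - dist (X i ω) η| ≤ δ₂ := by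
        have := abs_dist_sub_le (ηdp n ω) η (X i ω)
        rw [dist_comm (ηdp n ω) (X i ω), dist_comm η (X i ω)] at this
        exact le_trans this h2b
      calc |dist (X i ω) (ηdp n ω) ^ 4 - dist (X i ω) η ^ 4|
          ≤ 4 * Cc ^ 3 * |dist (X i ω) (ηdp n ω) - dist (X i ω) η| :=
            aux_pow4 dist_nonneg dist_nonneg ha (le_trans hb (by linarith))
        _ ≤ 4 * Cc ^ 3 * δ₂ := mul_le_mul_of_nonneg_left habs (by positivity)
    have hsum : |Av - Cv| ≤ (1 / (n:ℝ)) * ((n:ℝ) * (4 * Cc ^ 3 * δ₂)) := by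
      have hAC : Av - Cv = (1 / (n:ℝ)) *
          ∑ i : Fin n, (dist (X i ω) (ηdp n ω) ^ 4 - dist (X i ω) η ^ 4) := by
        rw [hAvdef, hCvdef, hCfdef]
        rw [Finset.sum_sub_distrib]
        ring
      rw [hAC, abs_mul, abs_of_nonneg (by positivity : (0:ℝ) ≤ 1 / (n:ℝ))]
      refine mul_le_mul_of_nonneg_left ?_ (by positivity)
      calc |∑ i : Fin n, (dist (X i ω) (ηdp n ω) ^ 4 - dist (X i ω) η ^ 4)|
          ≤ ∑ i : Fin n, |dist (X i ω) (ηdp n ω) ^ 4 - dist (X i ω) η ^ 4| :=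
            Finset.abs_sum_le_sum_abs _ _
        _ ≤ ∑ _i : Fin n, (4 * Cc ^ 3 * δ₂) := Finset.sum_le_sum fun i _ => hterm i
        _ = (n:ℝ) * (4 * Cc ^ 3 * δ₂) := by
            rw [Finset.sum_const, Finset.card_univ, Fintype.card_fin, nsmul_eq_mul]
    have hfin : (1 / (n:ℝ)) * ((n:ℝ) * (4 * Cc ^ 3 * δ₂)) ≤ 4 * Cc ^ 3 * δ₂ := by
      rcases Nat.eq_zero_or_pos n with hn | hn
      · subst hn; simp; positivity
      · have : (0:ℝ) < (n:ℝ) := by exact_mod_cast hn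
        rw [one_div, inv_mul_cancel_left₀ this.ne']
    have hBε : 4 * Cc ^ 3 * δ₂ ≤ ε4 := by
      calc 4 * Cc ^ 3 * δ₂ ≤ (4 * Cc ^ 3 + 1) * δ₂ := by nlinarith
        _ ≤ (4 * Cc ^ 3 + 1) * (ε4 / (4 * Cc ^ 3 + 1)) :=
            mul_le_mul_of_nonneg_left hδ₂2 (by positivity)
        _ = ε4 := mul_div_cancel₀ _ (by positivity)
    linarith [hsum.trans hfin]
  -- conclude
  have hident2 : Av - x ^ 2 + z - σF ^ 2 = (Cv - E) + (Av - Cv) + (V ^ 2 - x ^ 2) + z := by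
    rw [hEV]; ring
  have habs : |Av - x ^ 2 + z - σF ^ 2| < ε := by
    rw [hident2]
    calc |(Cv - E) + (Av - Cv) + (V ^ 2 - x ^ 2) + z|
        ≤ |(Cv - E) + (Av - Cv) + (V ^ 2 - x ^ 2)| + |z| := abs_add_le _ _
      _ ≤ |(Cv - E) + (Av - Cv)| + |V ^ 2 - x ^ 2| + |z| := by
          linarith [abs_add_le ((Cv - E) + (Av - Cv)) (V ^ 2 - x ^ 2)]
      _ ≤ |Cv - E| + |Av - Cv| + |V ^ 2 - x ^ 2| + |z| := by
          linarith [abs_add_le (Cv - E) (Av - Cv)]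
      _ < ε4 + ε4 + ε4 + ε4 := by linarith
      _ = ε := by rw [hε4def]; ring
  exact absurd hω (not_lt.mpr habs.le)
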